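/- arXiv:1901.09772 — 6 statements merged into one kernel-verified Lean document; each statement's English description precedes it below -/
import Mathlib

section
/- Let Ω be a Hermitian operator on a finite-dimensional Hilbert space with largest eigenvalue 1 attained on the unit vector Ψ, and let β(Ω) be its second largest eigenvalue. Then the maximum of tr(Ωσ) over all density operators σ with ⟨Ψ|σ|Ψ⟩ ≤ 1−ε equals 1 − (1−β(Ω))·ε, for 0 ≤ ε ≤ 1. -/
/-!
Split a vector as `y = cΨ + z` with `z ⟂ Ψ`. Since `Ω` is Hermitian and fixes `Ψ`, the quadratic
form of `Ω` has no cross terms, so `⟨y, Ω y⟩ = |c|² + ⟨z, Ω z⟩ ≤ |c|² + β‖z‖²`; that is,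
`Ω ≤ β • 1 + (1 - β) • |Ψ⟩⟨Ψ|` in the Loewner order. Pairing with a density operator `σ` gives
`tr(Ωσ) ≤ β + (1 - β)⟨Ψ|σ|Ψ⟩ ≤ 1 - (1 - β)ε`, where `β ≤ 1` comes from `Ω ≤ 1`. The bound is
attained by `σ = (1 - ε)|Ψ⟩⟨Ψ| + ε|x⟩⟨x|` for a unit vector `x ⟂ Ψ` realising `β`.
-/

open Matrix
open scoped ComplexOrder

theorem RCLike.re_mul_star_self {𝕜 : Type*} [RCLike 𝕜] (c : 𝕜) : re (c * star c) = ‖c‖ ^ 2 := by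
  rw [star_def, mul_conj, ← ofReal_pow, ofReal_re]

namespace Matrix

variable {m 𝕜 : Type*} [Fintype m] [RCLike 𝕜]

open RCLike

theorem PosSemidef.trace_mul_nonneg {A B : Matrix m m 𝕜} (hA : A.PosSemidef)
    (hB : B.PosSemidef) : 0 ≤ (A * B).trace := by
  classical
  obtain ⟨C, rfl⟩ : ∃ C : Matrix m m 𝕜, B = Cᴴ * C := by
    open scoped MatrixOrder Matrix.Norms.L2Operator in
    exact CStarAlgebra.nonneg_iff_eq_star_mul_self.mp hB.nonneg
  rw [← mul_assoc, trace_mul_cycle]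
  exact (hA.mul_mul_conjTranspose_same C).trace_nonneg

theorem trace_mul_vecMulVec_star (A : Matrix m m 𝕜) (w : m → 𝕜) :
    (A * vecMulVec w (star w)).trace = star w ⬝ᵥ A *ᵥ w := by
  rw [mul_vecMulVec, trace_vecMulVec, dotProduct_comm]

theorem star_smul_dotProduct_mulVec_smul (A : Matrix m m 𝕜) (c : 𝕜) (x : m → 𝕜) :
    star (c • x) ⬝ᵥ A *ᵥ (c • x) = star c * c * (star x ⬝ᵥ A *ᵥ x) := by
  simp only [star_smul, mulVec_smul, dotProduct_smul, smul_dotProduct, smul_eq_mul]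
  ring

theorem re_star_dotProduct_mulVec_le_one [DecidableEq m] {A : Matrix m m 𝕜}
    (hA : (1 - A).PosSemidef) {x : m → 𝕜} (hx : star x ⬝ᵥ x = 1) :
    re (star x ⬝ᵥ A *ᵥ x) ≤ 1 := by
  have := (nonneg_iff.1 (hA.dotProduct_mulVec_nonneg x)).1
  rwa [sub_mulVec, one_mulVec, dotProduct_sub, hx, map_sub, one_re, sub_nonneg] at this

theorem star_dotProduct_self_eq_ofReal_re (x : m → 𝕜) :
    star x ⬝ᵥ x = (re (star x ⬝ᵥ x) : 𝕜) :=
  (conj_eq_iff_re.1 (star_dotProduct x x).symm).symm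

theorem re_star_dotProduct_mulVec_le_of_forall_unit {A : Matrix m m 𝕜} {Ψ : m → 𝕜} {β : ℝ}
    (hβ : ∀ x : m → 𝕜, star x ⬝ᵥ x = 1 → star Ψ ⬝ᵥ x = 0 → re (star x ⬝ᵥ A *ᵥ x) ≤ β)
    {z : m → 𝕜} (hz : star Ψ ⬝ᵥ z = 0) :
    re (star z ⬝ᵥ A *ᵥ z) ≤ β * re (star z ⬝ᵥ z) := by
  classical
  rcases eq_or_ne z 0 with rfl | hz0
  · simp
  set s := re (star z ⬝ᵥ z)
  have hs : 0 < s := by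
    simpa using (pos_iff.1 (dotProduct_star_self_pos_iff.2 hz0)).1
  set c : 𝕜 := (((√s)⁻¹ : ℝ) : 𝕜)
  have hc : star c * c = (s⁻¹ : ℝ) := by
    simp [c, ← ofReal_mul, ← mul_inv, Real.mul_self_sqrt hs.le]
  have hunit := star_smul_dotProduct_mulVec_smul 1 c z
  rw [one_mulVec, one_mulVec, hc, star_dotProduct_self_eq_ofReal_re z, ← ofReal_mul,
    inv_mul_cancel₀ hs.ne', ofReal_one] at hunit
  have := hβ (c • z) hunit (by rw [dotProduct_smul, hz, smul_zero])
  rw [star_smul_dotProduct_mulVec_smul, hc, re_ofReal_mul, inv_mul_le_iff₀ hs] at this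
  linarith

section FixedVector

variable {A : Matrix m m 𝕜} {Ψ : m → 𝕜}

theorem star_dotProduct_mulVec_smul_add (hA : A.IsHermitian) (hΨ : star Ψ ⬝ᵥ Ψ = 1)
    (hfix : A *ᵥ Ψ = Ψ) (c : 𝕜) {z : m → 𝕜} (hz : star Ψ ⬝ᵥ z = 0) :
    star (c • Ψ + z) ⬝ᵥ A *ᵥ (c • Ψ + z) = star c * c + star z ⬝ᵥ A *ᵥ z := by
  have hΨA : star Ψ ᵥ* A = star Ψ := by
    rw [← hA.eq, ← star_mulVec, hfix]
  have hΨAz : star Ψ ⬝ᵥ A *ᵥ z = 0 := by rw [dotProduct_mulVec, hΨA, hz]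
  have hzΨ : star z ⬝ᵥ Ψ = 0 := by rw [star_dotProduct, hz, star_zero]
  simp only [star_add, star_smul, mulVec_add, mulVec_smul, hfix, add_dotProduct, dotProduct_add,
    smul_dotProduct, dotProduct_smul, hΨAz, hΨ, hzΨ, smul_eq_mul]
  ring

theorem re_star_dotProduct_mulVec_le_add_norm_sq (hA : A.IsHermitian) (hΨ : star Ψ ⬝ᵥ Ψ = 1)
    (hfix : A *ᵥ Ψ = Ψ) {β : ℝ}
    (hβ : ∀ z : m → 𝕜, star Ψ ⬝ᵥ z = 0 → re (star z ⬝ᵥ A *ᵥ z) ≤ β * re (star z ⬝ᵥ z))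
    (y : m → 𝕜) :
    re (star y ⬝ᵥ A *ᵥ y) ≤ β * re (star y ⬝ᵥ y) + (1 - β) * ‖star Ψ ⬝ᵥ y‖ ^ 2 := by
  classical
  set c := star Ψ ⬝ᵥ y
  set z := y - c • Ψ
  have hz : star Ψ ⬝ᵥ z = 0 := by simp [z, c, dotProduct_sub, dotProduct_smul, hΨ]
  have hy : y = c • Ψ + z := (add_sub_cancel _ _).symm
  have hA' := star_dotProduct_mulVec_smul_add hA hΨ hfix c hz
  have h1 := star_dotProduct_mulVec_smul_add isHermitian_one hΨ (one_mulVec Ψ) c hz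
  simp only [one_mulVec] at h1
  rw [hy, hA', h1, map_add, map_add, mul_comm (star c), re_mul_star_self]
  linarith [hβ z hz]

theorem posSemidef_smul_one_add_smul_vecMulVec_sub [DecidableEq m] (hA : A.IsHermitian)
    (hΨ : star Ψ ⬝ᵥ Ψ = 1) (hfix : A *ᵥ Ψ = Ψ) {β : ℝ}
    (hβ : ∀ z : m → 𝕜, star Ψ ⬝ᵥ z = 0 → re (star z ⬝ᵥ A *ᵥ z) ≤ β * re (star z ⬝ᵥ z)) :
    (β • (1 : Matrix m m 𝕜) + (1 - β) • vecMulVec Ψ (star Ψ) - A).PosSemidef := by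
  have hM : (β • (1 : Matrix m m 𝕜) + (1 - β) • vecMulVec Ψ (star Ψ) - A).IsHermitian :=
    ((isHermitian_one.smul (.all β)).add
      ((posSemidef_vecMulVec_self_star Ψ).isHermitian.smul (.all (1 - β)))).sub hA
  refine .of_dotProduct_mulVec_nonneg hM fun y ↦
    nonneg_iff.2 ⟨?_, hM.im_star_dotProduct_mulVec_self y⟩
  have hP : re (star y ⬝ᵥ vecMulVec Ψ (star Ψ) *ᵥ y) = ‖star Ψ ⬝ᵥ y‖ ^ 2 := by
    rw [vecMulVec_mulVec, op_smul_eq_smul, dotProduct_smul, smul_eq_mul, star_dotProduct y Ψ,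
      re_mul_star_self]
  simp only [sub_mulVec, add_mulVec, smul_mulVec, one_mulVec, dotProduct_sub, dotProduct_add,
    dotProduct_smul, map_sub, map_add, smul_re, hP]
  linarith [re_star_dotProduct_mulVec_le_add_norm_sq hA hΨ hfix hβ y]

theorem re_trace_mul_le_add_re_star_dotProduct_mulVec (hA : A.IsHermitian)
    (hΨ : star Ψ ⬝ᵥ Ψ = 1) (hfix : A *ᵥ Ψ = Ψ) {β : ℝ}
    (hβ : ∀ z : m → 𝕜, star Ψ ⬝ᵥ z = 0 → re (star z ⬝ᵥ A *ᵥ z) ≤ β * re (star z ⬝ᵥ z))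
    {σ : Matrix m m 𝕜} (hσ : σ.PosSemidef) :
    re (A * σ).trace ≤ β * re σ.trace + (1 - β) * re (star Ψ ⬝ᵥ σ *ᵥ Ψ) := by
  classical
  have h := nonneg_iff.1
    ((posSemidef_smul_one_add_smul_vecMulVec_sub hA hΨ hfix hβ).trace_mul_nonneg hσ) |>.1
  rw [sub_mul, add_mul, smul_mul_assoc, smul_mul_assoc, one_mul, trace_sub, trace_add,
    trace_smul, trace_smul, trace_mul_comm, trace_mul_vecMulVec_star] at h
  simp only [map_sub, map_add, smul_re] at h
  linarith

end FixedVector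

theorem exists_posSemidef_trace_eq_one_of_orthonormal (A : Matrix m m 𝕜) {Ψ x : m → 𝕜}
    (hΨ : star Ψ ⬝ᵥ Ψ = 1) (hx : star x ⬝ᵥ x = 1) (hxΨ : star Ψ ⬝ᵥ x = 0) {ε : ℝ}
    (hε0 : 0 ≤ ε) (hε1 : ε ≤ 1) :
    ∃ σ : Matrix m m 𝕜, σ.PosSemidef ∧ σ.trace = 1 ∧ star Ψ ⬝ᵥ σ *ᵥ Ψ = ((1 - ε : ℝ) : 𝕜) ∧
      (A * σ).trace = (1 - ε) • (star Ψ ⬝ᵥ A *ᵥ Ψ) + ε • (star x ⬝ᵥ A *ᵥ x) := by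
  have hΨx : star x ⬝ᵥ Ψ = 0 := by rw [star_dotProduct, hxΨ, star_zero]
  refine ⟨(1 - ε) • vecMulVec Ψ (star Ψ) + ε • vecMulVec x (star x),
    ((posSemidef_vecMulVec_self_star Ψ).smul (sub_nonneg.2 hε1)).add
      ((posSemidef_vecMulVec_self_star x).smul hε0), ?_, ?_, ?_⟩
  · rw [trace_add, trace_smul, trace_smul, trace_vecMulVec, trace_vecMulVec, dotProduct_comm,
      hΨ, dotProduct_comm, hx, ← add_smul, sub_add_cancel, one_smul]
  · simp [add_mulVec, smul_mulVec, vecMulVec_mulVec, hΨ, hΨx, real_smul_eq_coe_mul]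
  · rw [mul_add, mul_smul_comm, mul_smul_comm, trace_add, trace_smul, trace_smul,
      trace_mul_vecMulVec_star, trace_mul_vecMulVec_star]

end Matrix

theorem stmt0_general {n : ℕ} (Ω : Matrix (Fin n) (Fin n) ℂ)
    (hΩherm : Ω.IsHermitian) (hΩle : (1 - Ω).PosSemidef)
    (Ψ : Fin n → ℂ) (hΨunit : star Ψ ⬝ᵥ Ψ = 1) (hfix : Ω *ᵥ Ψ = Ψ)
    (β : ℝ)
    (hβ : IsGreatest {r : ℝ | ∃ x : Fin n → ℂ, star x ⬝ᵥ x = 1 ∧ star Ψ ⬝ᵥ x = 0 ∧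
        (star x ⬝ᵥ (Ω *ᵥ x)).re = r} β)
    (ε : ℝ) (hε0 : 0 ≤ ε) (hε1 : ε ≤ 1) :
    IsGreatest {t : ℝ | ∃ σ : Matrix (Fin n) (Fin n) ℂ, σ.PosSemidef ∧ σ.trace = 1 ∧
        (star Ψ ⬝ᵥ (σ *ᵥ Ψ)).re ≤ 1 - ε ∧ ((Ω * σ).trace).re = t}
      (1 - (1 - β) * ε) := by
  obtain ⟨⟨x, hx, hxΨ, hxβ⟩, hβmax⟩ := hβ
  have hβ1 : β ≤ 1 := hxβ ▸ re_star_dotProduct_mulVec_le_one hΩle hx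
  have hray := fun z (hz : star Ψ ⬝ᵥ z = 0) ↦ re_star_dotProduct_mulVec_le_of_forall_unit
    (fun y hy hyΨ ↦ hβmax ⟨y, hy, hyΨ, rfl⟩) hz
  constructor
  · obtain ⟨σ, hσ, htr, hΨσ, hΩσ⟩ :=
      exists_posSemidef_trace_eq_one_of_orthonormal Ω hΨunit hx hxΨ hε0 hε1
    refine ⟨σ, hσ, htr, by simp [hΨσ], ?_⟩
    rw [hΩσ, hfix, hΨunit, Complex.add_re, Complex.smul_re, Complex.smul_re, Complex.one_re, hxβ,
      smul_eq_mul, smul_eq_mul]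
    ring
  · rintro _ ⟨σ, hσ, htr, hΨσ, rfl⟩
    have hle := re_trace_mul_le_add_re_star_dotProduct_mulVec hΩherm hΨunit hfix hray hσ
    rw [htr, RCLike.one_re, RCLike.re_to_complex, RCLike.re_to_complex] at hle
    linarith [mul_le_mul_of_nonneg_left hΨσ (sub_nonneg.2 hβ1)]

/-- for a Hermitian operator Ω with 0 ≤ Ω ≤ I and unit eigenvector Ψ with
eigenvalue 1, the maximum of tr(Ωσ) over density operators σ with ⟨Ψ|σ|Ψ⟩ ≤ 1−ε equals
1 − (1−β(Ω))ε, where β(Ω) is the second largest eigenvalue (the largest Rayleigh quotient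
on the orthogonal complement of Ψ). -/
theorem stmt0 {n : ℕ} (Ω : Matrix (Fin n) (Fin n) ℂ)
    (hΩherm : Ω.IsHermitian) (hΩpos : Ω.PosSemidef) (hΩle : (1 - Ω).PosSemidef)
    (Ψ : Fin n → ℂ) (hΨunit : star Ψ ⬝ᵥ Ψ = 1) (hfix : Ω *ᵥ Ψ = Ψ)
    (β : ℝ)
    (hβ : IsGreatest {r : ℝ | ∃ x : Fin n → ℂ, star x ⬝ᵥ x = 1 ∧ star Ψ ⬝ᵥ x = 0 ∧
        (star x ⬝ᵥ (Ω *ᵥ x)).re = r} β)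
    (ε : ℝ) (hε0 : 0 ≤ ε) (hε1 : ε ≤ 1) :
    IsGreatest {t : ℝ | ∃ σ : Matrix (Fin n) (Fin n) ℂ, σ.PosSemidef ∧ σ.trace = 1 ∧
        (star Ψ ⬝ᵥ (σ *ᵥ Ψ)).re ≤ 1 - ε ∧ ((Ω * σ).trace).re = t}
      (1 - (1 - β) * ε) :=
  stmt0_general Ω hΩherm hΩle Ψ hΨunit hfix β hβ ε hε0 hε1
end

section
/- Let B₁ and B₂ be two orthonormal bases of a d-dimensional complex Hilbert space. Then tr[P(B₁)P(B₂)] = Σ_{ψ∈B₁, φ∈B₂} |⟨ψ|φ⟩|⁴ ≥ 1, with equality if and only if |⟨ψ|φ⟩|² = 1/d for all ψ ∈ B₁ and φ ∈ B₂. -/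
/-! The trace factorises over the Kronecker products, each pair (ψ, φ) contributing
|⟨ψ|φ⟩|² · |⟨ψ*|φ*⟩|² = |⟨ψ|φ⟩|⁴. By Parseval every row of the overlap matrix
x_{ψφ} = |⟨ψ|φ⟩|² sums to 1, so Σ x² = 1 + Σ (x - 1/d)²: this gives the bound, with
equality exactly when all x_{ψφ} = 1/d. -/

open Matrix
open scoped ComplexOrder

/-- The conjugate-basis test projector P(B) = Σ_{ψ∈B} |ψ⟩⟨ψ| ⊗ |ψ*⟩⟨ψ*| on ℂ^d ⊗ ℂ^d. -/
noncomputable def projCB (d : ℕ) (B : Fin d → Fin d → ℂ) :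
    Matrix (Fin d × Fin d) (Fin d × Fin d) ℂ :=
  ∑ i, Matrix.kroneckerMap (· * ·) (Matrix.vecMulVec (B i) (star (B i)))
      (Matrix.vecMulVec (star (B i)) (B i))

/-- The maximally entangled state |Φ⟩ = d^{-1/2} Σ_j |j⟩⊗|j⟩ as a vector on Fin d × Fin d. -/
noncomputable def PhiVec (d : ℕ) : Fin d × Fin d → ℂ :=
  fun p => if p.1 = p.2 then ((Real.sqrt d : ℝ) : ℂ)⁻¹ else 0

/-- The rank-one projector |Φ⟩⟨Φ|. -/
noncomputable def PhiMat (d : ℕ) : Matrix (Fin d × Fin d) (Fin d × Fin d) ℂ :=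
  Matrix.vecMulVec (PhiVec d) (star (PhiVec d))

/-- B is an orthonormal basis of ℂ^d. -/
def IsONB (d : ℕ) (B : Fin d → Fin d → ℂ) : Prop :=
  ∀ i j, star (B i) ⬝ᵥ B j = if i = j then 1 else 0

section

variable {𝕜 n : Type*} [RCLike 𝕜] [Fintype n]

theorem trace_vecMulVec_star_mul_vecMulVec_star (u w : n → 𝕜) :
    (vecMulVec u (star u) * vecMulVec w (star w)).trace = ((‖star u ⬝ᵥ w‖ ^ 2 : ℝ) : 𝕜) := by
  rw [vecMulVec_mul_vecMulVec, trace_vecMulVec, dotProduct_smul, smul_eq_mul,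
    dotProduct_star, dotProduct_comm w, RCLike.star_def, RCLike.mul_conj, RCLike.ofReal_pow]

theorem sum_norm_sq_star_dotProduct_of_mem_unitaryGroup [DecidableEq n] {U : Matrix n n 𝕜}
    (hU : U ∈ unitaryGroup n 𝕜) (v : n → 𝕜) :
    ((∑ j, ‖star v ⬝ᵥ U j‖ ^ 2 : ℝ) : 𝕜) = star v ⬝ᵥ v := by
  have hc : ∀ j, star v ⬝ᵥ U j = (U *ᵥ star v) j := fun j => dotProduct_comm _ _
  calc ((∑ j, ‖star v ⬝ᵥ U j‖ ^ 2 : ℝ) : 𝕜)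
      = star (U *ᵥ star v) ⬝ᵥ (U *ᵥ star v) := by
        simp only [hc]
        push_cast
        simp only [dotProduct, Pi.star_apply, RCLike.star_def, RCLike.conj_mul]
    _ = v ⬝ᵥ ((star U * U) *ᵥ star v) := by
        rw [star_mulVec, star_star, ← dotProduct_mulVec, mulVec_mulVec, star_eq_conjTranspose]
    _ = star v ⬝ᵥ v := by
        rw [mem_unitaryGroup_iff'.mp hU, one_mulVec, dotProduct_comm]

end

theorem trace_projCB_mul_projCB (d : ℕ) (B1 B2 : Fin d → Fin d → ℂ) :
    (projCB d B1 * projCB d B2).trace =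
      ((∑ i, ∑ j, ‖star (B1 i) ⬝ᵥ B2 j‖ ^ 4 : ℝ) : ℂ) := by
  simp only [projCB, Finset.sum_mul_sum, trace_sum]
  push_cast
  refine Finset.sum_congr rfl fun i _ => Finset.sum_congr rfl fun j _ => ?_
  have hstar := trace_vecMulVec_star_mul_vecMulVec_star (star (B1 i)) (star (B2 j))
  rw [star_star, star_star, dotProduct_star, norm_star, dotProduct_comm (B2 j)] at hstar
  rw [← mul_kronecker_mul, trace_kronecker,
    trace_vecMulVec_star_mul_vecMulVec_star, hstar, RCLike.ofReal_eq_complex_ofReal]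
  push_cast
  ring

theorem IsONB.mem_unitaryGroup {d : ℕ} {B : Fin d → Fin d → ℂ} (hB : IsONB d B) :
    of B ∈ unitaryGroup (Fin d) ℂ := by
  rw [mem_unitaryGroup_iff]
  ext i j
  simpa [mul_apply, one_apply, dotProduct, eq_comm, mul_comm] using hB j i

theorem IsONB.sum_norm_sq_star_dotProduct {d : ℕ} {B1 B2 : Fin d → Fin d → ℂ}
    (hB1 : IsONB d B1) (hB2 : IsONB d B2) (i : Fin d) :
    ∑ j, ‖star (B1 i) ⬝ᵥ B2 j‖ ^ 2 = 1 := by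
  have h := sum_norm_sq_star_dotProduct_of_mem_unitaryGroup hB2.mem_unitaryGroup (B1 i)
  rw [hB1 i i, if_pos rfl] at h
  have h' : ((∑ j, ‖star (B1 i) ⬝ᵥ B2 j‖ ^ 2 : ℝ) : ℂ) = 1 := h
  exact_mod_cast h'

section

open Finset Fintype

theorem sum_sq_eq_inv_card_add_sum_sq_sub {κ : Type*} [Fintype κ] {x : κ → ℝ}
    (hx : ∑ j, x j = 1) :
    ∑ j, x j ^ 2 = (card κ : ℝ)⁻¹ + ∑ j, (x j - (card κ : ℝ)⁻¹) ^ 2 := by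
  have hκ : (card κ : ℝ) ≠ 0 := by
    intro h
    rw [Nat.cast_eq_zero, card_eq_zero_iff] at h
    simp at hx
  simp only [sub_sq, sum_add_distrib, sum_sub_distrib, ← sum_mul, ← mul_sum, hx, sum_const,
    card_univ, nsmul_eq_mul]
  field_simp
  ring

variable {ι κ : Type*} [Fintype ι] [Fintype κ] [Nonempty ι] {x : ι → κ → ℝ}

theorem sum_sum_sq_eq_one_add (hcard : card ι = card κ) (hrow : ∀ i, ∑ j, x i j = 1) :
    ∑ i, ∑ j, x i j ^ 2 = 1 + ∑ i, ∑ j, (x i j - (card κ : ℝ)⁻¹) ^ 2 := by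
  have hκ : (card κ : ℝ) ≠ 0 := by simp [← hcard]
  simp only [sum_sq_eq_inv_card_add_sum_sq_sub (hrow _), sum_add_distrib, sum_const, card_univ,
    nsmul_eq_mul, hcard, mul_inv_cancel₀ hκ]

theorem one_le_sum_sum_sq (hcard : card ι = card κ) (hrow : ∀ i, ∑ j, x i j = 1) :
    1 ≤ ∑ i, ∑ j, x i j ^ 2 := by
  rw [sum_sum_sq_eq_one_add hcard hrow, le_add_iff_nonneg_right]
  positivity

theorem sum_sum_sq_eq_one_iff (hcard : card ι = card κ) (hrow : ∀ i, ∑ j, x i j = 1) :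
    ∑ i, ∑ j, x i j ^ 2 = 1 ↔ ∀ i j, x i j = (card κ : ℝ)⁻¹ := by
  rw [sum_sum_sq_eq_one_add hcard hrow, add_eq_left]
  simp [Finset.sum_eq_zero_iff_of_nonneg, Finset.sum_nonneg, sq_nonneg, sub_eq_zero]

end

/-- tr[P(B₁)P(B₂)] = Σ |⟨ψ|φ⟩|⁴ ≥ 1, with equality iff B₁, B₂ are mutually
unbiased. -/
theorem stmt3 {d : ℕ} (hd : 0 < d) (B1 B2 : Fin d → Fin d → ℂ)
    (hB1 : IsONB d B1) (hB2 : IsONB d B2) :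
    (projCB d B1 * projCB d B2).trace =
      ((∑ i, ∑ j, ‖star (B1 i) ⬝ᵥ B2 j‖ ^ 4 : ℝ) : ℂ) ∧
    (1 : ℝ) ≤ ∑ i, ∑ j, ‖star (B1 i) ⬝ᵥ B2 j‖ ^ 4 ∧
    ((∑ i, ∑ j, ‖star (B1 i) ⬝ᵥ B2 j‖ ^ 4 : ℝ) = 1 ↔
      ∀ i j, ‖star (B1 i) ⬝ᵥ B2 j‖ ^ 2 = 1 / (d : ℝ)) := by
  have : Nonempty (Fin d) := Fin.pos_iff_nonempty.mp hd
  have hrow := hB1.sum_norm_sq_star_dotProduct hB2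
  have hsq : ∀ i j, ‖star (B1 i) ⬝ᵥ B2 j‖ ^ 4 = (‖star (B1 i) ⬝ᵥ B2 j‖ ^ 2) ^ 2 :=
    fun _ _ => by ring
  simp only [hsq]
  refine ⟨by simpa only [hsq] using trace_projCB_mul_projCB d B1 B2,
    one_le_sum_sum_sq rfl hrow, ?_⟩
  rw [sum_sum_sq_eq_one_iff rfl hrow, Fintype.card_fin, one_div]
end

section
/- Let B₁ and B₂ be orthonormal bases of a d-dimensional Hilbert space, and set P̄(B_i) = P(B_i) − |Φ⟩⟨Φ|. Then P̄(B₁)·P̄(B₂) = 0 if and only if B₁ and B₂ are mutually unbiased. -/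
open Matrix
open scoped ComplexOrder

/-!
Write `v i = ψᵢ ⊗ ψᵢ*` and `w j = φⱼ ⊗ φⱼ*` (`kronConj`). Completeness of a basis gives
`∑ i, v i = √d Φ` and `⟨v i, Φ⟩ = 1/√d`, so `P(B) Φ = Φ` and the cross terms collapse:
`P̄(B₁) P̄(B₂) = P(B₁) P(B₂) - |Φ⟩⟨Φ| = ∑ i j, (|⟨ψᵢ, φⱼ⟩|² - 1/d) |v i⟩⟨w j|`.
Both `v` and `w` are orthonormal families, so sandwiching between `⟨v k|` and `|w l⟩` isolates a
single coefficient, and the product vanishes iff every coefficient does.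
-/

section OuterProduct

variable {ι κ m n R : Type*} [Fintype ι] [Fintype κ]

lemma sum_sum_vecMulVec [CommSemiring R] (v : ι → m → R) (w : κ → n → R) :
    ∑ i, ∑ j, vecMulVec (v i) (w j) = vecMulVec (∑ i, v i) (∑ j, w j) := by
  ext p q
  simp only [Matrix.sum_apply, vecMulVec_apply, Finset.sum_apply, Finset.sum_mul_sum]

lemma dotProduct_vecMulVec_mulVec [Fintype m] [Fintype n] [CommSemiring R] (x a : m → R)
    (b y : n → R) :
    x ⬝ᵥ (vecMulVec a b *ᵥ y) = (x ⬝ᵥ a) * (b ⬝ᵥ y) := by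
  rw [vecMulVec_mulVec, op_smul_eq_smul, dotProduct_smul, smul_eq_mul, mul_comm]

variable [Fintype m] [Fintype n] [CommSemiring R] [StarRing R] [DecidableEq ι] [DecidableEq κ]

lemma star_dotProduct_sum_smul_vecMulVec_mulVec {v : ι → m → R} {w : κ → n → R}
    (hv : ∀ i j, star (v i) ⬝ᵥ v j = if i = j then 1 else 0)
    (hw : ∀ i j, star (w i) ⬝ᵥ w j = if i = j then 1 else 0) (a : ι → κ → R) (k : ι) (l : κ) :
    star (v k) ⬝ᵥ ((∑ i, ∑ j, a i j • vecMulVec (v i) (star (w j))) *ᵥ w l) = a k l := by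
  simp [sum_mulVec, dotProduct_sum, smul_mulVec, dotProduct_smul, dotProduct_vecMulVec_mulVec,
    hv, hw]

lemma sum_smul_vecMulVec_eq_zero_iff {v : ι → m → R} {w : κ → n → R}
    (hv : ∀ i j, star (v i) ⬝ᵥ v j = if i = j then 1 else 0)
    (hw : ∀ i j, star (w i) ⬝ᵥ w j = if i = j then 1 else 0) (a : ι → κ → R) :
    ∑ i, ∑ j, a i j • vecMulVec (v i) (star (w j)) = 0 ↔ ∀ i j, a i j = 0 := by
  refine ⟨fun h k l => ?_, fun h => by simp [h]⟩
  simpa [h] using (star_dotProduct_sum_smul_vecMulVec_mulVec hv hw a k l).symm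

end OuterProduct

def kronConj {n : Type*} (u : n → ℂ) : n × n → ℂ :=
  fun p => u p.1 * star (u p.2)

lemma star_kronConj_dotProduct_kronConj {n : Type*} [Fintype n] (u w : n → ℂ) :
    star (kronConj u) ⬝ᵥ kronConj w = ((‖star u ⬝ᵥ w‖ ^ 2 : ℝ) : ℂ) := by
  rw [Complex.ofReal_pow, ← Complex.mul_conj']
  simp only [dotProduct, kronConj, Pi.star_apply, star_mul', Complex.star_def, map_sum, map_mul,
    Complex.conj_conj, Fintype.sum_prod_type, Finset.sum_mul_sum]
  exact Finset.sum_congr rfl fun a _ => Finset.sum_congr rfl fun b _ => by ring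

lemma IsONB.star_kronConj_dotProduct_kronConj {d : ℕ} {B : Fin d → Fin d → ℂ} (hB : IsONB d B)
    (i j : Fin d) :
    star (kronConj (B i)) ⬝ᵥ kronConj (B j) = if i = j then 1 else 0 := by
  rw [_root_.star_kronConj_dotProduct_kronConj, hB]
  split_ifs <;> simp

lemma IsONB.star_dotProduct_self {d : ℕ} {B : Fin d → Fin d → ℂ} (hB : IsONB d B) (i : Fin d) :
    star (B i) ⬝ᵥ B i = 1 := by
  simpa using hB i i

lemma IsONB.sum_mul_star {d : ℕ} {B : Fin d → Fin d → ℂ} (hB : IsONB d B) (a b : Fin d) :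
    ∑ i, B i a * star (B i b) = if a = b then 1 else 0 := by
  let N : Matrix (Fin d) (Fin d) ℂ := of fun i a => star (B i a)
  have hN : N * Nᴴ = 1 := by
    ext i j
    simpa [N, mul_apply, dotProduct, one_apply] using hB i j
  have hN' : Nᴴ * N = 1 := mul_eq_one_comm.mp hN
  simpa [N, mul_apply, one_apply] using congrFun (congrFun hN' a) b

section MaximallyEntangled

variable {d : ℕ}

lemma ofReal_sqrt_natCast_mul_self :
    ((√(d : ℝ) : ℝ) : ℂ) * ((√(d : ℝ) : ℝ) : ℂ) = d := by
  rw [← Complex.ofReal_mul, Real.mul_self_sqrt d.cast_nonneg, Complex.ofReal_natCast]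

lemma ofReal_sqrt_natCast_ne_zero (hd : 0 < d) : ((√(d : ℝ) : ℝ) : ℂ) ≠ 0 :=
  Complex.ofReal_ne_zero.mpr (Real.sqrt_ne_zero'.mpr (Nat.cast_pos.mpr hd))

lemma star_kronConj_dotProduct_PhiVec (u : Fin d → ℂ) :
    star (kronConj u) ⬝ᵥ PhiVec d = ((√(d : ℝ) : ℝ) : ℂ)⁻¹ * (star u ⬝ᵥ u) := by
  simp only [dotProduct, kronConj, PhiVec, Pi.star_apply, star_mul', star_star,
    Fintype.sum_prod_type, mul_ite, mul_zero, Finset.sum_ite_eq, Finset.mem_univ, if_true,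
    Finset.mul_sum]
  exact Finset.sum_congr rfl fun a _ => by ring

lemma star_PhiVec_dotProduct_PhiVec (hd : 0 < d) : star (PhiVec d) ⬝ᵥ PhiVec d = 1 := by
  simp only [dotProduct, PhiVec, Pi.star_apply, apply_ite star, star_zero, star_inv₀,
    Complex.star_def, Complex.conj_ofReal, Fintype.sum_prod_type, ite_mul, zero_mul,
    Finset.sum_ite_eq, Finset.mem_univ, if_true, Finset.sum_const, Finset.card_univ,
    Fintype.card_fin, nsmul_eq_mul, ← mul_inv, ofReal_sqrt_natCast_mul_self]
  exact mul_inv_cancel₀ (by exact_mod_cast hd.ne')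

lemma PhiMat_mul_self (hd : 0 < d) : PhiMat d * PhiMat d = PhiMat d := by
  rw [PhiMat, vecMulVec_mul_vecMulVec, star_PhiVec_dotProduct_PhiVec hd, one_smul]

lemma isHermitian_PhiMat : (PhiMat d).IsHermitian := by
  rw [PhiMat, IsHermitian, conjTranspose_vecMulVec, star_star]

lemma IsONB.sum_kronConj (hd : 0 < d) {B : Fin d → Fin d → ℂ} (hB : IsONB d B) :
    ∑ i, kronConj (B i) = ((√(d : ℝ) : ℝ) : ℂ) • PhiVec d := by
  funext p
  simp only [Finset.sum_apply, kronConj, hB.sum_mul_star, Pi.smul_apply, PhiVec, smul_eq_mul,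
    mul_ite, mul_zero, mul_inv_cancel₀ (ofReal_sqrt_natCast_ne_zero hd)]

end MaximallyEntangled

section ConjugateBasisProjector

variable {d : ℕ}

lemma projCB_eq_sum_vecMulVec (B : Fin d → Fin d → ℂ) :
    projCB d B = ∑ i, vecMulVec (kronConj (B i)) (star (kronConj (B i))) := by
  refine Finset.sum_congr rfl fun i _ => ?_
  ext p q
  simp only [kroneckerMap_apply, vecMulVec_apply, kronConj, Pi.star_apply, star_mul', star_star]
  ring

lemma isHermitian_projCB (B : Fin d → Fin d → ℂ) : (projCB d B).IsHermitian := by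
  rw [projCB_eq_sum_vecMulVec, IsHermitian, conjTranspose_sum]
  simp only [conjTranspose_vecMulVec, star_star]

lemma projCB_mul_projCB (B₁ B₂ : Fin d → Fin d → ℂ) :
    projCB d B₁ * projCB d B₂ = ∑ i, ∑ j, ((‖star (B₁ i) ⬝ᵥ B₂ j‖ ^ 2 : ℝ) : ℂ) •
      vecMulVec (kronConj (B₁ i)) (star (kronConj (B₂ j))) := by
  simp only [projCB_eq_sum_vecMulVec, Finset.sum_mul_sum, vecMulVec_mul_vecMulVec, vecMulVec_smul,
    star_kronConj_dotProduct_kronConj]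

lemma IsONB.projCB_mulVec_PhiVec (hd : 0 < d) {B : Fin d → Fin d → ℂ} (hB : IsONB d B) :
    projCB d B *ᵥ PhiVec d = PhiVec d := by
  simp only [projCB_eq_sum_vecMulVec, sum_mulVec, vecMulVec_mulVec, op_smul_eq_smul,
    star_kronConj_dotProduct_PhiVec, hB.star_dotProduct_self, mul_one, ← Finset.smul_sum,
    hB.sum_kronConj hd, smul_smul, inv_mul_cancel₀ (ofReal_sqrt_natCast_ne_zero hd), one_smul]

lemma IsONB.projCB_mul_PhiMat (hd : 0 < d) {B : Fin d → Fin d → ℂ} (hB : IsONB d B) :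
    projCB d B * PhiMat d = PhiMat d := by
  rw [PhiMat, mul_vecMulVec, hB.projCB_mulVec_PhiVec hd]

lemma IsONB.PhiMat_mul_projCB (hd : 0 < d) {B : Fin d → Fin d → ℂ} (hB : IsONB d B) :
    PhiMat d * projCB d B = PhiMat d := by
  rw [← (isHermitian_projCB B).eq, ← isHermitian_PhiMat.eq, ← conjTranspose_mul,
    hB.projCB_mul_PhiMat hd]

lemma IsONB.PhiMat_eq_sum (hd : 0 < d) {B₁ B₂ : Fin d → Fin d → ℂ} (hB₁ : IsONB d B₁)
    (hB₂ : IsONB d B₂) : PhiMat d =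
      ∑ i, ∑ j, (d : ℂ)⁻¹ • vecMulVec (kronConj (B₁ i)) (star (kronConj (B₂ j))) := by
  simp only [← Finset.smul_sum, sum_sum_vecMulVec, ← star_sum, hB₁.sum_kronConj hd,
    hB₂.sum_kronConj hd, star_smul, Complex.star_def, Complex.conj_ofReal, smul_vecMulVec,
    vecMulVec_smul, smul_smul, ofReal_sqrt_natCast_mul_self]
  rw [inv_mul_cancel₀ (by exact_mod_cast hd.ne'), one_smul, PhiMat]

lemma projCB_sub_PhiMat_mul_projCB_sub_PhiMat (hd : 0 < d) {B₁ B₂ : Fin d → Fin d → ℂ}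
    (hB₁ : IsONB d B₁) (hB₂ : IsONB d B₂) :
    (projCB d B₁ - PhiMat d) * (projCB d B₂ - PhiMat d) =
      ∑ i, ∑ j, (((‖star (B₁ i) ⬝ᵥ B₂ j‖ ^ 2 : ℝ) : ℂ) - (d : ℂ)⁻¹) •
        vecMulVec (kronConj (B₁ i)) (star (kronConj (B₂ j))) := by
  have hexpand : (projCB d B₁ - PhiMat d) * (projCB d B₂ - PhiMat d) =
      projCB d B₁ * projCB d B₂ - PhiMat d := by
    rw [sub_mul, mul_sub, mul_sub, hB₁.projCB_mul_PhiMat hd, hB₂.PhiMat_mul_projCB hd,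
      PhiMat_mul_self hd]
    abel
  rw [hexpand, projCB_mul_projCB, hB₁.PhiMat_eq_sum hd hB₂]
  simp only [← Finset.sum_sub_distrib, sub_smul]

end ConjugateBasisProjector

/-- (P(B₁)−|Φ⟩⟨Φ|)(P(B₂)−|Φ⟩⟨Φ|) = 0 iff B₁ and B₂ are mutually unbiased. -/
theorem stmt5 {d : ℕ} (hd : 0 < d) (B1 B2 : Fin d → Fin d → ℂ)
    (hB1 : IsONB d B1) (hB2 : IsONB d B2) :
    (projCB d B1 - PhiMat d) * (projCB d B2 - PhiMat d) = 0 ↔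
      ∀ i j, ‖star (B1 i) ⬝ᵥ B2 j‖ ^ 2 = 1 / (d : ℝ) := by
  rw [projCB_sub_PhiMat_mul_projCB_sub_PhiMat hd hB1 hB2,
    sum_smul_vecMulVec_eq_zero_iff hB1.star_kronConj_dotProduct_kronConj
      hB2.star_kronConj_dotProduct_kronConj]
  refine forall₂_congr fun i j => ?_
  rw [sub_eq_zero, one_div, ← Complex.ofReal_natCast, ← Complex.ofReal_inv, Complex.ofReal_inj]
end

section
/- Any separable positive semidefinite operator E on ℂ^d ⊗ ℂ^d satisfying E ≥ |Φ⟩⟨Φ| has trace at least d. In particular, any separable orthogonal projector P with P ≥ |Φ⟩⟨Φ| has rank at least d. -/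
open Matrix
open scoped ComplexOrder

/-!
With `Ω = Σ_j |j⟩ ⊗ |j⟩ = √d Φ`, the hypothesis `E ≥ |Φ⟩⟨Φ|` gives `⟨Ω|E|Ω⟩ ≥ d`. For a product
operator `|φ⟩⟨φ| ⊗ |χ⟩⟨χ|` one has `⟨Ω|·|Ω⟩ = |Σ_i φ_i χ_i|² ≤ ‖φ‖² ‖χ‖² = tr` by Cauchy–Schwarz,
so `⟨Ω|E|Ω⟩ ≤ tr E` for every separable `E`. An idempotent matrix has trace equal to its rank.
-/

open scoped Kronecker

theorem Matrix.trace_eq_rank_of_isIdempotentElem {K n : Type*} [Field K] [Fintype n]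
    [DecidableEq n] {A : Matrix n n K} (hA : IsIdempotentElem A) : A.trace = A.rank := by
  have hlin : IsIdempotentElem A.mulVecLin := by
    rw [IsIdempotentElem, Module.End.mul_eq_comp, ← Matrix.mulVecLin_mul, hA.eq]
  rw [← Matrix.trace_toLin'_eq, Matrix.rank, Matrix.toLin'_apply']
  exact ((LinearMap.isProj_range_iff_isIdempotentElem _).mpr hlin).trace

theorem Complex.norm_sum_mul_sq_le {ι : Type*} (s : Finset ι) (a b : ι → ℂ) :
    ‖∑ i ∈ s, a i * b i‖ ^ 2 ≤ (∑ i ∈ s, ‖a i‖ ^ 2) * ∑ i ∈ s, ‖b i‖ ^ 2 := by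
  calc ‖∑ i ∈ s, a i * b i‖ ^ 2 ≤ (∑ i ∈ s, ‖a i‖ * ‖b i‖) ^ 2 := by
        gcongr
        simpa only [norm_mul] using norm_sum_le s (fun i => a i * b i)
    _ ≤ _ := Finset.sum_mul_sq_le_sq_mul_sq s _ _

/-- `⟨Ω|A|Ω⟩` for the unnormalised maximally entangled vector `Ω = Σ_j |j⟩ ⊗ |j⟩ = √d Φ`. -/
def omegaForm {n : Type*} [Fintype n] : Matrix (n × n) (n × n) ℂ →ₗ[ℂ] ℂ where
  toFun A := ∑ i, ∑ j, A (i, i) (j, j)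
  map_add' A B := by simp only [Matrix.add_apply, Finset.sum_add_distrib]
  map_smul' c A := by simp only [Matrix.smul_apply, smul_eq_mul, Finset.mul_sum, RingHom.id_apply]

theorem omegaForm_apply {n : Type*} [Fintype n] (A : Matrix (n × n) (n × n) ℂ) :
    omegaForm A = ∑ i, ∑ j, A (i, i) (j, j) :=
  rfl

theorem omegaForm_one {n : Type*} [Fintype n] [DecidableEq n] :
    omegaForm (1 : Matrix (n × n) (n × n) ℂ) = Fintype.card n := by
  simp [omegaForm_apply, one_apply]

theorem star_phiVec_dotProduct_mulVec {d : ℕ} (A : Matrix (Fin d × Fin d) (Fin d × Fin d) ℂ) :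
    star (PhiVec d) ⬝ᵥ A *ᵥ PhiVec d = (d : ℂ)⁻¹ * omegaForm A := by
  have hs : (((√d : ℝ) : ℂ)⁻¹) * ((√d : ℝ) : ℂ)⁻¹ = (d : ℂ)⁻¹ := by
    rw [← mul_inv, ← Complex.ofReal_mul, Real.mul_self_sqrt d.cast_nonneg, Complex.ofReal_natCast]
  simp only [dotProduct, mulVec, PhiVec, Fintype.sum_prod_type, Pi.star_apply, apply_ite star,
    star_zero, mul_ite, ite_mul, mul_zero, zero_mul, Finset.sum_ite_eq, Finset.mem_univ, if_true,
    omegaForm_apply, Finset.mul_sum, Finset.sum_ite_irrel, Finset.sum_const_zero, star_inv₀,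
    Complex.star_def, Complex.conj_ofReal]
  refine Finset.sum_congr rfl fun i _ => Finset.sum_congr rfl fun j _ => ?_
  rw [← hs]
  ring

theorem star_phiVec_dotProduct_phiVec {d : ℕ} (hd : 0 < d) : star (PhiVec d) ⬝ᵥ PhiVec d = 1 := by
  simpa [omegaForm_one, hd.ne'] using star_phiVec_dotProduct_mulVec (1 : Matrix (Fin d × Fin d) _ ℂ)

theorem one_le_re_dotProduct_mulVec_of_posSemidef_sub {n : Type*} [Fintype n]
    {E : Matrix n n ℂ} {v : n → ℂ} (hv : star v ⬝ᵥ v = 1)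
    (hE : (E - vecMulVec v (star v)).PosSemidef) : 1 ≤ (star v ⬝ᵥ E *ᵥ v).re := by
  have h := (Complex.le_def.mp (hE.dotProduct_mulVec_nonneg v)).1
  rw [sub_mulVec, dotProduct_sub, vecMulVec_mulVec, hv, MulOpposite.op_one, one_smul, hv,
    Complex.sub_re, Complex.one_re, Complex.zero_re] at h
  linarith

section ProductOperator

variable {n : Type*} [Fintype n] (φ χ : n → ℂ)

theorem omegaForm_kronecker_vecMulVec :
    omegaForm (vecMulVec φ (star φ) ⊗ₖ vecMulVec χ (star χ))
      = (‖∑ i, φ i * χ i‖ ^ 2 : ℝ) := by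
  rw [Complex.ofReal_pow, ← Complex.mul_conj', omegaForm_apply, map_sum, Finset.sum_mul_sum]
  refine Finset.sum_congr rfl fun i _ => Finset.sum_congr rfl fun j _ => ?_
  simp only [kroneckerMap_apply, vecMulVec_apply, Pi.star_apply, map_mul, Complex.star_def]
  ring

theorem trace_kronecker_vecMulVec :
    (vecMulVec φ (star φ) ⊗ₖ vecMulVec χ (star χ)).trace
      = ((∑ i, ‖φ i‖ ^ 2) * ∑ i, ‖χ i‖ ^ 2 : ℝ) := by
  have hnorm (ψ : n → ℂ) : ψ ⬝ᵥ star ψ = (∑ i, ‖ψ i‖ ^ 2 : ℝ) := by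
    simp only [dotProduct, Pi.star_apply, Complex.star_def, Complex.mul_conj', Complex.ofReal_sum,
      Complex.ofReal_pow]
  rw [trace_kronecker, trace_vecMulVec, trace_vecMulVec, hnorm, hnorm, Complex.ofReal_mul]

theorem omegaForm_re_le_trace_re_kronecker_vecMulVec :
    (omegaForm (vecMulVec φ (star φ) ⊗ₖ vecMulVec χ (star χ))).re
      ≤ (vecMulVec φ (star φ) ⊗ₖ vecMulVec χ (star χ)).trace.re := by
  rw [omegaForm_kronecker_vecMulVec, trace_kronecker_vecMulVec, Complex.ofReal_re,
    Complex.ofReal_re]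
  exact Complex.norm_sum_mul_sq_le _ φ χ

end ProductOperator

theorem omegaForm_re_le_trace_re_of_separable {n ι : Type*} [Fintype n] [Fintype ι]
    (c : ι → ℝ) (hc : ∀ j, 0 ≤ c j) (φ χ : ι → n → ℂ) :
    (omegaForm (∑ j, (c j : ℂ) •
        vecMulVec (φ j) (star (φ j)) ⊗ₖ vecMulVec (χ j) (star (χ j)))).re
      ≤ (∑ j, (c j : ℂ) •
        vecMulVec (φ j) (star (φ j)) ⊗ₖ vecMulVec (χ j) (star (χ j))).trace.re := by
  rw [map_sum, trace_sum, Complex.re_sum, Complex.re_sum]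
  refine Finset.sum_le_sum fun j _ => ?_
  rw [map_smul, trace_smul, smul_eq_mul, smul_eq_mul, Complex.re_ofReal_mul, Complex.re_ofReal_mul]
  exact mul_le_mul_of_nonneg_left (omegaForm_re_le_trace_re_kronecker_vecMulVec _ _) (hc j)

/-- any separable PSD operator E ≥ |Φ⟩⟨Φ| has trace at least d; in particular
any separable orthogonal projector P ≥ |Φ⟩⟨Φ| has rank at least d. -/
theorem stmt9 {d : ℕ} (hd : 0 < d)
    (E : Matrix (Fin d × Fin d) (Fin d × Fin d) ℂ)
    (m : ℕ) (c : Fin m → ℝ) (hc : ∀ j, 0 ≤ c j)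
    (φ χ : Fin m → Fin d → ℂ)
    (hE : E = ∑ j, (c j : ℂ) •
        Matrix.kroneckerMap (· * ·) (Matrix.vecMulVec (φ j) (star (φ j)))
          (Matrix.vecMulVec (χ j) (star (χ j))))
    (hge : (E - PhiMat d).PosSemidef) :
    (d : ℝ) ≤ E.trace.re ∧
    (E * E = E → E.IsHermitian → d ≤ E.rank) := by
  have hΦE : 1 ≤ (star (PhiVec d) ⬝ᵥ E *ᵥ PhiVec d).re :=
    one_le_re_dotProduct_mulVec_of_posSemidef_sub (star_phiVec_dotProduct_phiVec hd) hge
  have hsep : (omegaForm E).re ≤ E.trace.re := hE ▸ omegaForm_re_le_trace_re_of_separable c hc φ χ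
  rw [star_phiVec_dotProduct_mulVec, ← Complex.ofReal_natCast, ← Complex.ofReal_inv,
    Complex.re_ofReal_mul] at hΦE
  have hdpos : (0 : ℝ) < d := Nat.cast_pos.mpr hd
  have htrace : (d : ℝ) ≤ E.trace.re :=
    calc (d : ℝ) ≤ d * ((d : ℝ)⁻¹ * (omegaForm E).re) := le_mul_of_one_le_right hdpos.le hΦE
      _ = (omegaForm E).re := by field_simp
      _ ≤ E.trace.re := hsep
  refine ⟨htrace, fun hidem _ => ?_⟩
  have hrank : (E.rank : ℝ) = E.trace.re := by
    rw [trace_eq_rank_of_isIdempotentElem hidem, Complex.natCast_re]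
  exact_mod_cast htrace.trans hrank.ge
end

section
/- Let P₁, P₂ be projectors on ℂ^d ⊗ ℂ^d, each diagonal in some product basis and each satisfying P_i ≥ |Φ⟩⟨Φ|. If (P₁−|Φ⟩⟨Φ|)(P₂−|Φ⟩⟨Φ|) = 0, then there exist mutually unbiased orthonormal bases B₁, B₂ of ℂ^d with P₁ = P(B₁) and P₂ = P(B₂). -/
open Matrix
open scoped ComplexOrder

/-!
Write `P = ∑ⱼ |ψⱼ⟩⟨ψⱼ| ⊗ Qⱼ` with projectors `Qⱼ`, and recall `Φ = d^{-1/2} ∑ⱼ ψⱼ ⊗ ψ̄ⱼ`.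
Since `P` kills `ψⱼ ⊗ (1 - Qⱼ) ψ̄ⱼ`, the inequality `P ≥ |Φ⟩⟨Φ|` forces `⟨Φ|ψⱼ ⊗ (1 - Qⱼ) ψ̄ⱼ⟩ = 0`,
i.e. `Qⱼ ψ̄ⱼ = ψ̄ⱼ`. Then `(P - |Φ⟩⟨Φ|)(ψⱼ ⊗ ψ̄ⱼ) = ψⱼ ⊗ ψ̄ⱼ - d^{-1/2} Φ`, and pairing these
vectors for the two projectors turns the orthogonality hypothesis into `|⟨ψᵢ|ξⱼ⟩|² = 1/d`.
Finally, if `χ ∈ ran Qⱼ` is orthogonal to `ψ̄ⱼ`, then `ψⱼ ⊗ χ` is fixed by `P₁ - |Φ⟩⟨Φ|`, hence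
killed by `P₂ - |Φ⟩⟨Φ|`; pairing with `ξₘ ⊗ ξ̄ₘ` gives `⟨ξₘ|ψⱼ⟩⟨ξ̄ₘ|χ⟩ = 0`, and as no overlap
vanishes, `χ = 0`. So `Qⱼ = |ψ̄ⱼ⟩⟨ψ̄ⱼ|`.
-/

open scoped Kronecker

section KroneckerVec

variable {α l m n p : Type*}

def kroneckerVec [Mul α] (u : m → α) (v : n → α) : m × n → α := fun q => u q.1 * v q.2

infixl:100 " ⊗ᵥ " => kroneckerVec

theorem kronecker_mulVec_kroneckerVec [CommSemiring α] [Fintype m] [Fintype n]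
    (M : Matrix l m α) (N : Matrix p n α) (u : m → α) (v : n → α) :
    (M ⊗ₖ N) *ᵥ (u ⊗ᵥ v) = (M *ᵥ u) ⊗ᵥ (N *ᵥ v) := by
  ext q
  simp only [mulVec, dotProduct, kroneckerVec, kroneckerMap_apply, Fintype.sum_prod_type,
    Finset.sum_mul_sum]
  exact Finset.sum_congr rfl fun _ _ => Finset.sum_congr rfl fun _ _ => by ring

theorem smul_kroneckerVec [CommSemiring α] (a : α) (u : m → α) (v : n → α) :
    (a • u) ⊗ᵥ v = a • (u ⊗ᵥ v) := by
  ext q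
  simp [kroneckerVec, mul_assoc]

theorem kroneckerVec_zero [MulZeroClass α] (u : m → α) : u ⊗ᵥ (0 : n → α) = 0 := by
  ext q
  simp [kroneckerVec]

theorem star_kroneckerVec [CommSemiring α] [StarRing α] (u : m → α) (v : n → α) :
    star (u ⊗ᵥ v) = star u ⊗ᵥ star v := by
  ext q
  simp [kroneckerVec]

theorem kroneckerVec_dotProduct_kroneckerVec [CommSemiring α] [Fintype m] [Fintype n]
    (u u' : m → α) (v v' : n → α) :
    (u ⊗ᵥ v) ⬝ᵥ (u' ⊗ᵥ v') = (u ⬝ᵥ u') * (v ⬝ᵥ v') := by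
  simp only [dotProduct, kroneckerVec, Fintype.sum_prod_type, Finset.sum_mul_sum]
  exact Finset.sum_congr rfl fun _ _ => Finset.sum_congr rfl fun _ _ => by ring

theorem kronecker_sum [NonUnitalNonAssocSemiring α] {ι : Type*} (s : Finset ι)
    (M : Matrix l m α) (N : ι → Matrix n p α) :
    M ⊗ₖ (∑ k ∈ s, N k) = ∑ k ∈ s, M ⊗ₖ N k := by
  ext q r
  simp [Matrix.sum_apply, Finset.mul_sum]

end KroneckerVec

section HermitianForms

variable {𝕜 n : Type*} [RCLike 𝕜] [Fintype n]

theorem Matrix.IsHermitian.star_dotProduct_mulVec {T : Matrix n n 𝕜} (hT : T.IsHermitian)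
    (x y : n → 𝕜) : star x ⬝ᵥ (T *ᵥ y) = star (T *ᵥ x) ⬝ᵥ y := by
  rw [dotProduct_mulVec, star_mulVec, hT.eq]

theorem IsStarProjection.star_dotProduct_mulVec_self {R : Matrix n n 𝕜}
    (hR : IsStarProjection R) (u : n → 𝕜) :
    star u ⬝ᵥ (R *ᵥ u) = star (R *ᵥ u) ⬝ᵥ (R *ᵥ u) := by
  have hRh : R.IsHermitian := hR.isSelfAdjoint
  rw [← hRh.star_dotProduct_mulVec, mulVec_mulVec, hR.isIdempotentElem.eq]

theorem star_dotProduct_eq_zero_of_posSemidef_sub_vecMulVec {P : Matrix n n 𝕜} {v x : n → 𝕜}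
    (hP : (P - vecMulVec v (star v)).PosSemidef) (hx : P *ᵥ x = 0) : star v ⬝ᵥ x = 0 := by
  have hnonneg := hP.dotProduct_mulVec_nonneg x
  rw [sub_mulVec, hx, zero_sub, vecMulVec_mulVec, op_smul_eq_smul, dotProduct_neg,
    dotProduct_smul, smul_eq_mul, star_dotProduct x v, Right.nonneg_neg_iff] at hnonneg
  have hzero := le_antisymm hnonneg (mul_star_self_nonneg _)
  exact (mul_eq_zero.mp hzero).elim id star_eq_zero.mp

end HermitianForms

namespace IsONB

variable {d : ℕ} {B : Fin d → Fin d → ℂ}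

theorem dotProduct_self (hB : IsONB d B) (i : Fin d) : star (B i) ⬝ᵥ B i = 1 := by
  simpa using hB i i

theorem dotProduct_star_self (hB : IsONB d B) (i : Fin d) : B i ⬝ᵥ star (B i) = 1 := by
  rw [dotProduct_comm, hB.dotProduct_self]

theorem mul_conjTranspose (hB : IsONB d B) : of B * (of B)ᴴ = 1 := by
  ext i j
  simpa [mul_apply, one_apply, dotProduct, mul_comm, eq_comm] using hB j i

theorem eq_zero_of_forall_dotProduct_eq_zero (hB : IsONB d B) {v : Fin d → ℂ}
    (hv : ∀ m, B m ⬝ᵥ v = 0) : v = 0 := by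
  have hBv : of B *ᵥ v = 0 := funext hv
  rw [← one_mulVec v, ← mul_eq_one_comm.mp hB.mul_conjTranspose, ← mulVec_mulVec, hBv,
    mulVec_zero]

theorem isStarProjection_sum_vecMulVec (hB : IsONB d B) (s : Finset (Fin d)) :
    IsStarProjection (∑ k ∈ s, vecMulVec (B k) (star (B k))) := by
  refine ⟨?_, ?_⟩
  · rw [IsIdempotentElem, Finset.sum_mul_sum]
    refine Finset.sum_congr rfl fun k hk => ?_
    simp_rw [vecMulVec_mul_vecMulVec, hB k, ite_smul, one_smul, zero_smul]
    simp [apply_ite (vecMulVec (B k)), hk]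
  · simp [IsSelfAdjoint, star_sum, star_eq_conjTranspose, conjTranspose_vecMulVec]

end IsONB

section MaximallyEntangled

variable {d : ℕ}

@[simp]
theorem star_PhiVec : star (PhiVec d) = PhiVec d := by
  ext q
  by_cases h : q.1 = q.2 <;> simp [PhiVec, h, Complex.conj_ofReal]

theorem PhiVec_dotProduct_kroneckerVec (u v : Fin d → ℂ) :
    PhiVec d ⬝ᵥ (u ⊗ᵥ v) = ((√d : ℝ) : ℂ)⁻¹ * (u ⬝ᵥ v) := by
  simp only [dotProduct, PhiVec, kroneckerVec, Fintype.sum_prod_type, ite_mul, zero_mul,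
    Finset.sum_ite_eq, Finset.mem_univ, if_true, Finset.mul_sum]

theorem ofReal_sqrt_inv_mul_self : ((√d : ℝ) : ℂ)⁻¹ * ((√d : ℝ) : ℂ)⁻¹ = (d : ℂ)⁻¹ := by
  rw [← mul_inv, ← Complex.ofReal_mul, Real.mul_self_sqrt (Nat.cast_nonneg d),
    Complex.ofReal_natCast]

theorem PhiVec_dotProduct_self [NeZero d] : PhiVec d ⬝ᵥ PhiVec d = 1 := by
  simp only [dotProduct, PhiVec, Fintype.sum_prod_type, mul_ite, ite_mul, mul_zero,
    Finset.sum_ite_eq, Finset.mem_univ, if_true, ofReal_sqrt_inv_mul_self, Finset.sum_const,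
    Finset.card_univ, Fintype.card_fin, nsmul_eq_mul]
  exact mul_inv_cancel₀ (NeZero.ne _)

theorem PhiMat_mulVec (x : Fin d × Fin d → ℂ) :
    PhiMat d *ᵥ x = (PhiVec d ⬝ᵥ x) • PhiVec d := by
  rw [PhiMat, vecMulVec_mulVec, op_smul_eq_smul, star_PhiVec]

end MaximallyEntangled

def controlledProj {d : ℕ} (ψ : Fin d → Fin d → ℂ) (Q : Fin d → Matrix (Fin d) (Fin d) ℂ) :
    Matrix (Fin d × Fin d) (Fin d × Fin d) ℂ :=
  ∑ j, vecMulVec (ψ j) (star (ψ j)) ⊗ₖ Q j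

section ControlledProjector

variable {d : ℕ} {ψ ξ : Fin d → Fin d → ℂ} {Q R : Fin d → Matrix (Fin d) (Fin d) ℂ}

theorem controlledProj_mulVec_kroneckerVec (hψ : IsONB d ψ) (j : Fin d) (w : Fin d → ℂ) :
    controlledProj ψ Q *ᵥ (ψ j ⊗ᵥ w) = ψ j ⊗ᵥ (Q j *ᵥ w) := by
  rw [controlledProj, sum_mulVec, Finset.sum_eq_single j]
  · rw [kronecker_mulVec_kroneckerVec, vecMulVec_mulVec, op_smul_eq_smul, hψ.dotProduct_self,
      one_smul]
  · intro i _ hij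
    rw [kronecker_mulVec_kroneckerVec, vecMulVec_mulVec, op_smul_eq_smul, smul_kroneckerVec,
      hψ i j, if_neg hij, zero_smul]
  · simp

theorem mulVec_star_eq_self_of_posSemidef (hψ : IsONB d ψ) (hQ : ∀ j, IsStarProjection (Q j))
    (hge : (controlledProj ψ Q - PhiMat d).PosSemidef) (j : Fin d) :
    Q j *ᵥ star (ψ j) = star (ψ j) := by
  have hPw : controlledProj ψ Q *ᵥ (ψ j ⊗ᵥ ((1 - Q j) *ᵥ star (ψ j))) = 0 := by
    rw [controlledProj_mulVec_kroneckerVec hψ, mulVec_mulVec, (hQ j).mul_one_sub_self,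
      zero_mulVec, kroneckerVec_zero]
  have hΦw := star_dotProduct_eq_zero_of_posSemidef_sub_vecMulVec hge hPw
  rw [star_PhiVec, PhiVec_dotProduct_kroneckerVec, mul_eq_zero] at hΦw
  have hw : (1 - Q j) *ᵥ star (ψ j) = 0 := by
    rw [← dotProduct_star_self_eq_zero, ← (hQ j).one_sub.star_dotProduct_mulVec_self, star_star]
    exact hΦw.resolve_left (by simp [j.pos.ne'])
  rwa [sub_mulVec, one_mulVec, sub_eq_zero, eq_comm] at hw

theorem sub_PhiMat_mulVec_kroneckerVec_star (hψ : IsONB d ψ) {j : Fin d}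
    (hQ : Q j *ᵥ star (ψ j) = star (ψ j)) :
    (controlledProj ψ Q - PhiMat d) *ᵥ (ψ j ⊗ᵥ star (ψ j)) =
      ψ j ⊗ᵥ star (ψ j) - ((√d : ℝ) : ℂ)⁻¹ • PhiVec d := by
  rw [sub_mulVec, controlledProj_mulVec_kroneckerVec hψ, hQ, PhiMat_mulVec,
    PhiVec_dotProduct_kroneckerVec, hψ.dotProduct_star_self, mul_one]

theorem norm_star_dotProduct_sq_eq_one_div (hψ : IsONB d ψ) (hξ : IsONB d ξ) {i j : Fin d}
    (hQ : Q i *ᵥ star (ψ i) = star (ψ i)) (hR : R j *ᵥ star (ξ j) = star (ξ j))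
    (hT : (controlledProj ψ Q - PhiMat d).IsHermitian)
    (horth : (controlledProj ψ Q - PhiMat d) * (controlledProj ξ R - PhiMat d) = 0) :
    ‖star (ψ i) ⬝ᵥ ξ j‖ ^ 2 = 1 / d := by
  have : NeZero d := ⟨i.pos.ne'⟩
  have hc_star : star ((√d : ℝ) : ℂ)⁻¹ = ((√d : ℝ) : ℂ)⁻¹ := by simp [Complex.conj_ofReal]
  have hz : ψ i ⬝ᵥ star (ξ j) = star (star (ψ i) ⬝ᵥ ξ j) := by
    rw [star_dotProduct, star_star, dotProduct_comm]
  have h := congrArg (star (ψ i ⊗ᵥ star (ψ i)) ⬝ᵥ · *ᵥ (ξ j ⊗ᵥ star (ξ j))) horth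
  simp only [zero_mulVec, dotProduct_zero] at h
  rw [← mulVec_mulVec, hT.star_dotProduct_mulVec, sub_PhiMat_mulVec_kroneckerVec_star hψ hQ,
    sub_PhiMat_mulVec_kroneckerVec_star hξ hR, star_sub, star_smul, hc_star, star_PhiVec,
    star_kroneckerVec, star_star, sub_dotProduct, dotProduct_sub, dotProduct_sub,
    smul_dotProduct, smul_dotProduct, dotProduct_smul, dotProduct_smul,
    kroneckerVec_dotProduct_kroneckerVec, dotProduct_comm _ (PhiVec d),
    PhiVec_dotProduct_kroneckerVec, PhiVec_dotProduct_kroneckerVec, PhiVec_dotProduct_self,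
    hψ.dotProduct_self, hξ.dotProduct_star_self, hz, Complex.star_def, Complex.mul_conj'] at h
  have h' : ((‖star (ψ i) ⬝ᵥ ξ j‖ ^ 2 : ℝ) : ℂ) = ((1 / d : ℝ) : ℂ) := by
    push_cast
    linear_combination h + ofReal_sqrt_inv_mul_self
  exact_mod_cast h'

theorem eq_zero_of_mul_sub_PhiMat_eq_zero (hψ : IsONB d ψ) (hξ : IsONB d ξ)
    (hR : ∀ m, R m *ᵥ star (ξ m) = star (ξ m))
    (hT : (controlledProj ξ R - PhiMat d).IsHermitian)
    (horth : (controlledProj ξ R - PhiMat d) * (controlledProj ψ Q - PhiMat d) = 0)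
    {j : Fin d} (hoverlap : ∀ m, star (ξ m) ⬝ᵥ ψ j ≠ 0) {χ : Fin d → ℂ}
    (hQχ : Q j *ᵥ χ = χ) (hψχ : ψ j ⬝ᵥ χ = 0) : χ = 0 := by
  have hΦ : PhiVec d ⬝ᵥ (ψ j ⊗ᵥ χ) = 0 := by
    rw [PhiVec_dotProduct_kroneckerVec, hψχ, mul_zero]
  have hT₁ : (controlledProj ψ Q - PhiMat d) *ᵥ (ψ j ⊗ᵥ χ) = ψ j ⊗ᵥ χ := by
    rw [sub_mulVec, controlledProj_mulVec_kroneckerVec hψ, hQχ, PhiMat_mulVec, hΦ, zero_smul,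
      sub_zero]
  have hT₂ : (controlledProj ξ R - PhiMat d) *ᵥ (ψ j ⊗ᵥ χ) = 0 := by
    rw [← hT₁, mulVec_mulVec, horth, zero_mulVec]
  refine hξ.eq_zero_of_forall_dotProduct_eq_zero fun m => ?_
  have h := congrArg (star (ξ m ⊗ᵥ star (ξ m)) ⬝ᵥ ·) hT₂
  simp only [dotProduct_zero] at h
  rw [hT.star_dotProduct_mulVec, sub_PhiMat_mulVec_kroneckerVec_star hξ (hR m), star_sub,
    sub_dotProduct, star_smul, star_PhiVec, smul_dotProduct, hΦ, smul_zero, sub_zero,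
    star_kroneckerVec, star_star, kroneckerVec_dotProduct_kroneckerVec, mul_eq_zero] at h
  exact h.resolve_left (hoverlap m)

theorem controlledProj_eq_projCB_of_mul_sub_PhiMat_eq_zero (hψ : IsONB d ψ) (hξ : IsONB d ξ)
    (hQ : ∀ j, IsStarProjection (Q j)) (hQψ : ∀ j, Q j *ᵥ star (ψ j) = star (ψ j))
    (hR : ∀ m, R m *ᵥ star (ξ m) = star (ξ m))
    (hT : (controlledProj ξ R - PhiMat d).IsHermitian)
    (horth : (controlledProj ξ R - PhiMat d) * (controlledProj ψ Q - PhiMat d) = 0)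
    (hoverlap : ∀ m j, star (ξ m) ⬝ᵥ ψ j ≠ 0) :
    controlledProj ψ Q = projCB d ψ := by
  refine Finset.sum_congr rfl fun j _ => congrArg _ <| ext_iff_mulVec.mpr fun v => ?_
  rw [vecMulVec_mulVec, op_smul_eq_smul, ← sub_eq_zero]
  refine eq_zero_of_mul_sub_PhiMat_eq_zero hψ hξ hR hT horth (hoverlap · j) ?_ ?_
  · rw [mulVec_sub, mulVec_mulVec, (hQ j).isIdempotentElem.eq, mulVec_smul, hQψ]
  · have hQh : (Q j).IsHermitian := (hQ j).isSelfAdjoint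
    have hQv := hQh.star_dotProduct_mulVec (star (ψ j)) v
    rw [hQψ, star_star] at hQv
    rw [dotProduct_sub, hQv, dotProduct_smul, hψ.dotProduct_star_self, smul_eq_mul, mul_one,
      sub_self]

end ControlledProjector

theorem stmt12_general {d : ℕ}
    (P1 P2 : Matrix (Fin d × Fin d) (Fin d × Fin d) ℂ)
    (B1 B1' B2 B2' : Fin d → Fin d → ℂ)
    (hB1 : IsONB d B1) (hB1' : IsONB d B1') (hB2 : IsONB d B2) (hB2' : IsONB d B2')
    (A1 A2 : Fin d → Finset (Fin d))
    (hP1 : P1 = ∑ j, ∑ k ∈ A1 j,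
        Matrix.kroneckerMap (· * ·) (Matrix.vecMulVec (B1 j) (star (B1 j)))
          (Matrix.vecMulVec (B1' k) (star (B1' k))))
    (hP2 : P2 = ∑ j, ∑ k ∈ A2 j,
        Matrix.kroneckerMap (· * ·) (Matrix.vecMulVec (B2 j) (star (B2 j)))
          (Matrix.vecMulVec (B2' k) (star (B2' k))))
    (hge1 : (P1 - PhiMat d).PosSemidef) (hge2 : (P2 - PhiMat d).PosSemidef)
    (horth : (P1 - PhiMat d) * (P2 - PhiMat d) = 0) :
    ∃ C1 C2 : Fin d → Fin d → ℂ, IsONB d C1 ∧ IsONB d C2 ∧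
      (∀ i j, ‖star (C1 i) ⬝ᵥ C2 j‖ ^ 2 = 1 / (d : ℝ)) ∧
      P1 = projCB d C1 ∧ P2 = projCB d C2 := by
  set Q1 : Fin d → Matrix (Fin d) (Fin d) ℂ :=
    fun j => ∑ k ∈ A1 j, vecMulVec (B1' k) (star (B1' k))
  set Q2 : Fin d → Matrix (Fin d) (Fin d) ℂ :=
    fun j => ∑ k ∈ A2 j, vecMulVec (B2' k) (star (B2' k))
  have hP1' : P1 = controlledProj B1 Q1 := by simp only [hP1, controlledProj, kronecker_sum, Q1]
  have hP2' : P2 = controlledProj B2 Q2 := by simp only [hP2, controlledProj, kronecker_sum, Q2]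
  subst hP1' hP2'
  have hQ1 (j : Fin d) : IsStarProjection (Q1 j) := hB1'.isStarProjection_sum_vecMulVec (A1 j)
  have hQ2 (j : Fin d) : IsStarProjection (Q2 j) := hB2'.isStarProjection_sum_vecMulVec (A2 j)
  have hfix1 := mulVec_star_eq_self_of_posSemidef hB1 hQ1 hge1
  have hfix2 := mulVec_star_eq_self_of_posSemidef hB2 hQ2 hge2
  have hmub (i j : Fin d) : ‖star (B1 i) ⬝ᵥ B2 j‖ ^ 2 = 1 / d :=
    norm_star_dotProduct_sq_eq_one_div hB1 hB2 (hfix1 i) (hfix2 j) hge1.isHermitian horth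
  have hoverlap (i j : Fin d) : star (B1 i) ⬝ᵥ B2 j ≠ 0 := fun h => by
    simpa [h, eq_comm, i.pos.ne'] using hmub i j
  have horth' : (controlledProj B2 Q2 - PhiMat d) * (controlledProj B1 Q1 - PhiMat d) = 0 := by
    simpa [hge1.isHermitian.eq, hge2.isHermitian.eq] using congrArg conjTranspose horth
  refine ⟨B1, B2, hB1, hB2, hmub, ?_, ?_⟩
  · refine controlledProj_eq_projCB_of_mul_sub_PhiMat_eq_zero hB1 hB2 hQ1 hfix1 hfix2
      hge2.isHermitian horth' fun m j => ?_
    rw [star_dotProduct]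
    exact star_ne_zero.mpr (hoverlap j m)
  · exact controlledProj_eq_projCB_of_mul_sub_PhiMat_eq_zero hB2 hB1 hQ2 hfix2 hfix1
      hge1.isHermitian horth hoverlap

/-- two projectors diagonal in product bases, each ≥ |Φ⟩⟨Φ|, whose reduced
parts are orthogonal, are CB projectors of two mutually unbiased bases. -/
theorem stmt12 {d : ℕ} (hd : 0 < d)
    (P1 P2 : Matrix (Fin d × Fin d) (Fin d × Fin d) ℂ)
    (B1 B1' B2 B2' : Fin d → Fin d → ℂ)
    (hB1 : IsONB d B1) (hB1' : IsONB d B1') (hB2 : IsONB d B2) (hB2' : IsONB d B2')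
    (A1 A2 : Fin d → Finset (Fin d))
    (hP1 : P1 = ∑ j, ∑ k ∈ A1 j,
        Matrix.kroneckerMap (· * ·) (Matrix.vecMulVec (B1 j) (star (B1 j)))
          (Matrix.vecMulVec (B1' k) (star (B1' k))))
    (hP2 : P2 = ∑ j, ∑ k ∈ A2 j,
        Matrix.kroneckerMap (· * ·) (Matrix.vecMulVec (B2 j) (star (B2 j)))
          (Matrix.vecMulVec (B2' k) (star (B2' k))))
    (hge1 : (P1 - PhiMat d).PosSemidef) (hge2 : (P2 - PhiMat d).PosSemidef)
    (horth : (P1 - PhiMat d) * (P2 - PhiMat d) = 0) :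
    ∃ C1 C2 : Fin d → Fin d → ℂ, IsONB d C1 ∧ IsONB d C2 ∧
      (∀ i j, ‖star (C1 i) ⬝ᵥ C2 j‖ ^ 2 = 1 / (d : ℝ)) ∧
      P1 = projCB d C1 ∧ P2 = projCB d C2 :=
  stmt12_general P1 P2 B1 B1' B2 B2' hB1 hB1' hB2 hB2' A1 A2 hP1 hP2 hge1 hge2 horth
end

section
/- Let |Ψ⟩ = Σ_j s_j |jj⟩ be a bipartite pure state on ℂ^d⊗ℂ^d with Schmidt coefficients s_0 ≥ s_1 ≥ ⋯ ≥ s_{d−1} ≥ 0, Σ_j s_j² = 1. Any positive-partial-transpose operator Ω with 0 ≤ Ω ≤ I and Ω|Ψ⟩ = |Ψ⟩ of the homogeneous form Ω = |Ψ⟩⟨Ψ| + λ(I − |Ψ⟩⟨Ψ|) satisfies λ ≥ s₀s₁/(1 + s₀s₁). -/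
open Matrix
open scoped ComplexOrder

/-!
On the span of `|ij⟩` and `|ji⟩` (`i ≠ j`) the partial transpose of
`Ω = |Ψ⟩⟨Ψ| + λ(I − |Ψ⟩⟨Ψ|)` is `[[λ, sᵢsⱼ(1 − λ)], [sᵢsⱼ(1 − λ), λ]]`, so testing it against
`|ij⟩ − |ji⟩` gives `2λ − 2sᵢsⱼ(1 − λ) ≥ 0`, i.e. `λ(1 + s₀s₁) ≥ s₀s₁` for `(i, j) = (0, 1)`.
-/

namespace Matrix

variable {m n R : Type*}

theorem PosSemidef.apply_add_apply_sub_apply_sub_apply_nonneg [Fintype n] [DecidableEq n]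
    [CommRing R] [PartialOrder R] [StarRing R] {M : Matrix n n R} (hM : M.PosSemidef) (a b : n) :
    0 ≤ M a a + M b b - M a b - M b a := by
  set x : n → R := Pi.single a 1 - Pi.single b 1
  have hx : star x = x := by simp only [x, star_sub, ← Pi.single_star, star_one]
  have hquad : star x ⬝ᵥ M *ᵥ x = M a a + M b b - M a b - M b a := by
    simp only [hx, x, mulVec_sub, mulVec_single_one, sub_dotProduct, dotProduct_sub,
      single_dotProduct, one_mul, col_apply]
    ring
  exact hquad ▸ hM.dotProduct_mulVec_nonneg x

def partialTranspose (M : Matrix (m × n) (m × n) R) : Matrix (m × n) (m × n) R :=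
  of fun p q => M (p.1, q.2) (q.1, p.2)

end Matrix

section Homogeneous

variable {ι : Type*} [DecidableEq ι]

def homogeneousOperator (Ψ : ι → ℂ) (lam : ℝ) : Matrix ι ι ℂ :=
  vecMulVec Ψ (star Ψ) + (lam : ℂ) • (1 - vecMulVec Ψ (star Ψ))

theorem homogeneousOperator_apply (Ψ : ι → ℂ) (lam : ℝ) (p q : ι) :
    homogeneousOperator Ψ lam p q =
      Ψ p * star (Ψ q) * (1 - lam) + if p = q then (lam : ℂ) else 0 := by
  simp only [homogeneousOperator, Matrix.add_apply, Matrix.smul_apply, Matrix.sub_apply,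
    one_apply, vecMulVec_apply, Pi.star_apply, smul_eq_mul]
  split_ifs <;> ring

end Homogeneous

def schmidtVector {n : Type*} [DecidableEq n] (s : n → ℝ) : n × n → ℂ :=
  fun p => if p.1 = p.2 then (s p.1 : ℂ) else 0

section Schmidt

variable {n : Type*} [DecidableEq n] (s : n → ℝ) (lam : ℝ) {i j : n}

theorem partialTranspose_homogeneousOperator_schmidtVector_diag (hij : i ≠ j) :
    partialTranspose (homogeneousOperator (schmidtVector s) lam) (i, j) (i, j) = lam := by
  simp [partialTranspose, homogeneousOperator_apply, schmidtVector, hij]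

theorem partialTranspose_homogeneousOperator_schmidtVector_swap (hij : i ≠ j) :
    partialTranspose (homogeneousOperator (schmidtVector s) lam) (i, j) (j, i) =
      s i * s j * (1 - lam) := by
  simp [partialTranspose, homogeneousOperator_apply, schmidtVector, hij]

theorem mul_le_mul_one_add_of_posSemidef_partialTranspose [Fintype n] (hij : i ≠ j)
    (hPPT : (partialTranspose (homogeneousOperator (schmidtVector s) lam)).PosSemidef) :
    s i * s j ≤ lam * (1 + s i * s j) := by
  have h := hPPT.apply_add_apply_sub_apply_sub_apply_nonneg (i, j) (j, i)
  rw [partialTranspose_homogeneousOperator_schmidtVector_diag s lam hij,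
    partialTranspose_homogeneousOperator_schmidtVector_diag s lam hij.symm,
    partialTranspose_homogeneousOperator_schmidtVector_swap s lam hij,
    partialTranspose_homogeneousOperator_schmidtVector_swap s lam hij.symm] at h
  have h' : (0 : ℂ) ≤ ((2 * (lam * (1 + s i * s j) - s i * s j) : ℝ) : ℂ) := by
    convert h using 1
    push_cast
    ring
  rw [Complex.zero_le_real] at h'
  linarith

end Schmidt

/-- for |Ψ⟩ = Σ_j s_j|jj⟩ with decreasing Schmidt coefficients, any PPT
homogeneous verification operator Ω = |Ψ⟩⟨Ψ| + λ(I − |Ψ⟩⟨Ψ|) with 0 ≤ Ω ≤ I and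
Ω|Ψ⟩ = |Ψ⟩ satisfies λ ≥ s₀s₁/(1 + s₀s₁). -/
theorem stmt14 {d : ℕ} (hd : 2 ≤ d)
    (s : Fin d → ℝ) (hs0 : ∀ j, 0 ≤ s j)
    (Ψ : Fin d × Fin d → ℂ)
    (hΨ : Ψ = fun p => if p.1 = p.2 then ((s p.1 : ℝ) : ℂ) else 0)
    (lam : ℝ)
    (Ω : Matrix (Fin d × Fin d) (Fin d × Fin d) ℂ)
    (hΩ : Ω = Matrix.vecMulVec Ψ (star Ψ) +
        (lam : ℂ) • (1 - Matrix.vecMulVec Ψ (star Ψ)))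
    (hPPT : (Matrix.of fun p q : Fin d × Fin d => Ω (p.1, q.2) (q.1, p.2)).PosSemidef) :
    s ⟨0, by omega⟩ * s ⟨1, by omega⟩ / (1 + s ⟨0, by omega⟩ * s ⟨1, by omega⟩) ≤ lam := by
  have hPPT' : (partialTranspose (homogeneousOperator (schmidtVector s) lam)).PosSemidef := by
    subst hΨ hΩ
    exact hPPT
  have h01 : (⟨0, by omega⟩ : Fin d) ≠ ⟨1, by omega⟩ := by simp [Fin.ext_iff]
  have hprod : 0 ≤ s ⟨0, by omega⟩ * s ⟨1, by omega⟩ := mul_nonneg (hs0 _) (hs0 _)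
  rw [div_le_iff₀ (by positivity)]
  linarith [mul_le_mul_one_add_of_posSemidef_partialTranspose s lam h01 hPPT']
end
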